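/- arXiv:math/0405602 — 3 statements merged into one kernel-verified Lean document; each statement's English description precedes it below -/
import Mathlib

section
/- Let λ, m, m̃, R̃, Q̃ be real numbers with 1 < λ, λ⁴ < 1/(√2 − 1/2), m > 0, m̃ ≤ 2λm, 0 < R̃ ≤ √2·λ·m, and Q̃ ≥ 2m/λ. Then m̃ − (1/2)(R̃ + Q̃²/R̃) < 0. -/
/-!
On `0 < x ≤ Q̃` the function `x ↦ x + Q̃² / x` is non-increasing. Since `λ⁴ < 2` we have
`R̃ ≤ √2 λ m ≤ 2m/λ ≤ Q̃`, so the Penrose bound at `(R̃, Q̃)` is at least its value at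
`(√2 λ m, 2m/λ)`, namely `(√2 λ m + 2√2 m / λ³) / 2`. This exceeds `2 λ m ≥ m̃` exactly when
`λ⁴ < 2√2 / (4 - √2) = 1 / (√2 - 1/2)`.
-/

open Real Set

theorem antitoneOn_add_sq_div {a : ℝ} : AntitoneOn (fun x => x + a ^ 2 / x) (Ioc 0 a) := by
  rintro x ⟨hx, hxa⟩ y ⟨hy, hya⟩ hxy
  have hxy_le : x * y ≤ a ^ 2 := by nlinarith
  have hdiff : a ^ 2 / x - a ^ 2 / y = a ^ 2 * (y - x) / (x * y) := by field_simp
  have hgain : y - x ≤ a ^ 2 * (y - x) / (x * y) := by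
    rw [le_div_iff₀ (by positivity)]
    nlinarith
  dsimp only
  linarith

theorem pow_four_lt_two_of_lt_inv_sqrt_two_sub_half {lam : ℝ}
    (hlam4 : lam ^ 4 < 1 / (√2 - 1 / 2)) : lam ^ 4 < 2 := by
  have h : (1 : ℝ) < √2 := by simpa using Real.sqrt_lt_sqrt zero_le_one one_lt_two
  calc lam ^ 4 < 1 / (√2 - 1 / 2) := hlam4
    _ < 1 / (1 / 2) := by gcongr; linarith
    _ = 2 := by norm_num

theorem sqrt_two_mul_le_two_div {lam m : ℝ} (hlam : 0 < lam) (hm : 0 < m) (hlam4 : lam ^ 4 < 2) :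
    √2 * lam * m ≤ 2 * m / lam := by
  have hsq : lam ^ 2 ≤ √2 := Real.le_sqrt_of_sq_le (by linarith)
  have h2 : √2 * √2 = 2 := Real.mul_self_sqrt zero_le_two
  have : √2 * lam ^ 2 ≤ √2 * √2 := mul_le_mul_of_nonneg_left hsq (Real.sqrt_nonneg 2)
  rw [le_div_iff₀ hlam]
  nlinarith

theorem two_mul_lt_penrose_bound {lam m : ℝ} (hlam : 0 < lam) (hm : 0 < m)
    (hlam4 : lam ^ 4 < 1 / (√2 - 1 / 2)) :
    2 * lam * m < 1 / 2 * (√2 * lam * m + (2 * m / lam) ^ 2 / (√2 * lam * m)) := by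
  have h2 : √2 * √2 = 2 := Real.mul_self_sqrt zero_le_two
  have hs : (1 : ℝ) < √2 := by simpa using Real.sqrt_lt_sqrt zero_le_one one_lt_two
  have hA : lam ^ 4 * (√2 - 1 / 2) < 1 := (lt_div_iff₀ (by linarith)).mp hlam4
  have hbound : 1 / 2 * (√2 * lam * m + (2 * m / lam) ^ 2 / (√2 * lam * m))
      = m * (√2 * lam ^ 4 + 2 * √2) / (2 * lam ^ 3) := by
    field_simp
    rw [Real.sq_sqrt zero_le_two]
    ring
  rw [hbound, lt_div_iff₀ (by positivity)]
  have := mul_lt_mul_of_pos_right hA (by positivity : 0 < 2 * √2 * m)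
  linear_combination this - 2 * lam ^ 4 * m * h2

theorem glued_data_violates_charged_penrose
    (lam m mTilde RTilde QTilde : ℝ)
    (hlam : 1 < lam) (hlam4 : lam ^ 4 < 1 / (Real.sqrt 2 - 1 / 2))
    (hm : 0 < m)
    (hmTilde : mTilde ≤ 2 * lam * m)
    (hRTilde_pos : 0 < RTilde) (hRTilde : RTilde ≤ Real.sqrt 2 * lam * m)
    (hQTilde : QTilde ≥ 2 * m / lam) :
    mTilde - (1 / 2) * (RTilde + QTilde ^ 2 / RTilde) < 0 := by
  have hlam0 : 0 < lam := by linarith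
  have hR₀ : 0 < √2 * lam * m := by positivity
  have hR₀Q : √2 * lam * m ≤ QTilde :=
    (sqrt_two_mul_le_two_div hlam0 hm (pow_four_lt_two_of_lt_inv_sqrt_two_sub_half hlam4)).trans
      hQTilde
  rw [sub_neg]
  calc mTilde ≤ 2 * lam * m := hmTilde
    _ < 1 / 2 * (√2 * lam * m + (2 * m / lam) ^ 2 / (√2 * lam * m)) :=
      two_mul_lt_penrose_bound hlam0 hm hlam4
    _ ≤ 1 / 2 * (√2 * lam * m + QTilde ^ 2 / (√2 * lam * m)) := by
      have : 0 ≤ 2 * m / lam := by positivity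
      gcongr
    _ ≤ 1 / 2 * (RTilde + QTilde ^ 2 / RTilde) := by
      gcongr 1 / 2 * ?_
      exact antitoneOn_add_sq_div ⟨hRTilde_pos, hRTilde.trans hR₀Q⟩ ⟨hR₀, hR₀Q⟩ hRTilde
end

section
/- Let m and T be real numbers with 0 < m ≤ 1 and T > 2, and define ψ : (0,∞) → ℝ by ψ(r) = −e^{−T} ∫_{e^{−T}}^{r} (log s)/(s(s+m)) ds. Then for every r > e^{−T}, 0 < ψ(r) ≤ T² e^{−T}/(2m). -/
/-!
The integrand `log s / (s * (s + m))` is negative on `(0, 1)` and nonnegative on `[1, ∞)`.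
On `(e^{-T}, 1]` it lies between `log s / (m s)` and `log s / (2 s)` (using `m ≤ 1`), whose
primitives are `log² s / (2m)` and `log² s / 4`, so its integral from `e^{-T}` lies in
`[-T²/(2m), -T²/4]` there. On `[1, ∞)` it is at most `log s / s²`, whose total integral is `1`,
and `1 < T²/4`. Hence `∫_{e^{-T}}^r` lies in `[-T²/(2m), 0)` for every `r > e^{-T}`.
-/

open Real Set intervalIntegral

lemma div_le_div_of_nonpos_left {a b c : ℝ} (ha : a ≤ 0) (hc : 0 < c) (hcb : c ≤ b) :
    a / c ≤ a / b := by
  simpa only [neg_div, neg_le_neg_iff] using div_le_div_of_nonneg_left (neg_nonneg.2 ha) hc hcb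

section Antiderivatives

variable {x y : ℝ}

lemma uIcc_subset_Ioi_zero (hx : 0 < x) (hy : 0 < y) : uIcc x y ⊆ Ioi 0 :=
  fun _ hs => (lt_min hx hy).trans_le hs.1

lemma intervalIntegrable_log_div {p : ℝ → ℝ} (hp : ContinuousOn p (Ioi 0))
    (hp0 : ∀ s, 0 < s → p s ≠ 0) (hx : 0 < x) (hy : 0 < y) :
    IntervalIntegrable (fun s => log s / p s) MeasureTheory.volume x y := by
  have hsub := uIcc_subset_Ioi_zero hx hy
  exact ContinuousOn.intervalIntegrable <|
    (continuousOn_log.mono fun s hs => (hsub hs).ne').div (hp.mono hsub) fun s hs => hp0 s (hsub hs)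

lemma integral_log_div_const_mul_self {c : ℝ} (hc : c ≠ 0) (hx : 0 < x) (hy : 0 < y) :
    ∫ s in x..y, log s / (c * s) = (log y ^ 2 - log x ^ 2) / (2 * c) := by
  have hderiv : ∀ s ∈ uIcc x y,
      HasDerivAt (fun t => log t ^ 2 / (2 * c)) (log s / (c * s)) s := by
    intro s hs
    have hs0 : s ≠ 0 := (uIcc_subset_Ioi_zero hx hy hs).ne'
    refine (((hasDerivAt_log hs0).pow 2).div_const (2 * c)).congr_deriv ?_
    field_simp
    ring
  rw [integral_eq_sub_of_hasDerivAt hderiv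
    (intervalIntegrable_log_div (by fun_prop) (fun s hs => by positivity) hx hy)]
  ring

lemma integral_log_div_sq (hx : 0 < x) (hy : 0 < y) :
    ∫ s in x..y, log s / s ^ 2 = (log x + 1) / x - (log y + 1) / y := by
  have hderiv : ∀ s ∈ uIcc x y, HasDerivAt (fun t => -((log t + 1) / t)) (log s / s ^ 2) s := by
    intro s hs
    have hs0 : s ≠ 0 := (uIcc_subset_Ioi_zero hx hy hs).ne'
    refine ((((hasDerivAt_log hs0).add_const 1).div (hasDerivAt_id s) hs0).neg).congr_deriv ?_
    simp only [id]
    field_simp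
    ring
  rw [integral_eq_sub_of_hasDerivAt hderiv
    (intervalIntegrable_log_div (by fun_prop) (fun s hs => by positivity) hx hy)]
  ring

end Antiderivatives

section Kernel

variable {m x y : ℝ}

lemma intervalIntegrable_log_div_mul_add (hm : 0 < m) (hx : 0 < x) (hy : 0 < y) :
    IntervalIntegrable (fun s => log s / (s * (s + m))) MeasureTheory.volume x y :=
  intervalIntegrable_log_div (by fun_prop) (fun s hs => by positivity) hx hy

lemma le_integral_log_div_mul_add (hm : 0 < m) (hx : 0 < x) (hxy : x ≤ y) (hy : y ≤ 1) :
    (log y ^ 2 - log x ^ 2) / (2 * m) ≤ ∫ s in x..y, log s / (s * (s + m)) := by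
  have hy0 : 0 < y := hx.trans_le hxy
  rw [← integral_log_div_const_mul_self hm.ne' hx hy0]
  refine integral_mono_on hxy
    (intervalIntegrable_log_div (by fun_prop) (fun s hs => by positivity) hx hy0)
    (intervalIntegrable_log_div_mul_add hm hx hy0) fun s hs => ?_
  have hs0 : 0 < s := hx.trans_le hs.1
  exact div_le_div_of_nonpos_left (log_nonpos hs0.le (hs.2.trans hy)) (by positivity)
    (by nlinarith)

lemma integral_log_div_mul_add_le (hm : 0 < m) (hm1 : m ≤ 1) (hx : 0 < x) (hxy : x ≤ y)
    (hy : y ≤ 1) :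
    ∫ s in x..y, log s / (s * (s + m)) ≤ (log y ^ 2 - log x ^ 2) / (2 * 2) := by
  have hy0 : 0 < y := hx.trans_le hxy
  rw [← integral_log_div_const_mul_self two_ne_zero hx hy0]
  refine integral_mono_on hxy (intervalIntegrable_log_div_mul_add hm hx hy0)
    (intervalIntegrable_log_div (by fun_prop) (fun s hs => by positivity) hx hy0) fun s hs => ?_
  have hs0 : 0 < s := hx.trans_le hs.1
  exact div_le_div_of_nonpos_left (log_nonpos hs0.le (hs.2.trans hy)) (by positivity)
    (by nlinarith [hs.2.trans hy])

lemma integral_log_div_mul_add_nonneg (hm : 0 < m) (hy : 1 ≤ y) :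
    0 ≤ ∫ s in (1 : ℝ)..y, log s / (s * (s + m)) :=
  integral_nonneg hy fun s hs => by
    have := log_nonneg hs.1
    have : 0 < s := one_pos.trans_le hs.1
    positivity

lemma integral_log_div_mul_add_le_one (hm : 0 < m) (hy : 1 ≤ y) :
    ∫ s in (1 : ℝ)..y, log s / (s * (s + m)) ≤ 1 := by
  have hy0 : 0 < y := one_pos.trans_le hy
  calc ∫ s in (1 : ℝ)..y, log s / (s * (s + m))
      ≤ ∫ s in (1 : ℝ)..y, log s / s ^ 2 := by
        refine integral_mono_on hy (intervalIntegrable_log_div_mul_add hm one_pos hy0)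
          (intervalIntegrable_log_div (by fun_prop) (fun s hs => by positivity) one_pos hy0)
          fun s hs => ?_
        have hs0 : 0 < s := one_pos.trans_le hs.1
        exact div_le_div_of_nonneg_left (log_nonneg hs.1) (by positivity) (by nlinarith)
    _ = 1 - (log y + 1) / y := by rw [integral_log_div_sq one_pos hy0, log_one]; ring
    _ ≤ 1 := sub_le_self _ (div_nonneg (by linarith [log_nonneg hy]) hy0.le)

end Kernel

lemma integral_log_div_mul_add_mem_Ico {m T r : ℝ} (hm : 0 < m) (hm1 : m ≤ 1) (hT : 2 < T)
    (hr : exp (-T) < r) :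
    ∫ s in exp (-T)..r, log s / (s * (s + m)) ∈ Ico (-(T ^ 2 / (2 * m))) 0 := by
  have ha0 : 0 < exp (-T) := exp_pos _
  have hlog : log (exp (-T)) = -T := log_exp _
  have hr0 : 0 < r := ha0.trans hr
  rcases le_or_gt r 1 with hr1 | hr1
  · have hlower := le_integral_log_div_mul_add hm ha0 hr.le hr1
    have hupper := integral_log_div_mul_add_le hm hm1 ha0 hr.le hr1
    have hlogr : -T < log r := hlog ▸ log_lt_log ha0 hr
    have hlogr0 : log r ≤ 0 := log_nonpos hr0.le hr1
    rw [hlog] at hlower hupper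
    refine ⟨le_trans ?_ hlower, hupper.trans_lt ?_⟩
    · rw [← neg_div]
      gcongr
      nlinarith [sq_nonneg (log r)]
    · nlinarith
  · have ha1 : exp (-T) < 1 := exp_lt_one_iff.2 (by linarith)
    rw [← integral_add_adjacent_intervals (intervalIntegrable_log_div_mul_add hm ha0 one_pos)
      (intervalIntegrable_log_div_mul_add hm one_pos hr0)]
    have hlower := le_integral_log_div_mul_add hm ha0 ha1.le le_rfl
    have hupper := integral_log_div_mul_add_le hm hm1 ha0 ha1.le le_rfl
    have htail0 := integral_log_div_mul_add_nonneg hm hr1.le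
    have htail1 := integral_log_div_mul_add_le_one hm hr1.le
    rw [hlog, log_one] at hlower hupper
    constructor
    · linarith [show (0 ^ 2 - (-T) ^ 2) / (2 * m) = -(T ^ 2 / (2 * m)) by ring]
    · nlinarith

theorem psi_positive_and_bounded (m T : ℝ) (hm : 0 < m) (hm1 : m ≤ 1) (hT : 2 < T)
    (ψ : ℝ → ℝ)
    (hψ : ∀ r : ℝ, ψ r =
      -Real.exp (-T) * ∫ s in Real.exp (-T)..r, Real.log s / (s * (s + m))) :
    ∀ r : ℝ, Real.exp (-T) < r →
      0 < ψ r ∧ ψ r ≤ T ^ 2 * Real.exp (-T) / (2 * m) := by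
  intro r hr
  obtain ⟨hlower, hneg⟩ := integral_log_div_mul_add_mem_Ico hm hm1 hT hr
  have hexp : 0 < exp (-T) := exp_pos _
  rw [hψ r]
  constructor
  · exact mul_pos_of_neg_of_neg (neg_neg_of_pos hexp) hneg
  · calc -exp (-T) * ∫ s in exp (-T)..r, log s / (s * (s + m))
        ≤ -exp (-T) * -(T ^ 2 / (2 * m)) := mul_le_mul_of_nonpos_left hlower (by linarith)
      _ = T ^ 2 * exp (-T) / (2 * m) := by ring
end

section
/- Fix m > 0 and let p₁ = (0,0,1), p₂ = (0,0,−1) ∈ ℝ³, and for x ∈ ℝ³ ∖ {p₁, p₂} set u(x)² = 1 + m/‖x − p₁‖ + m/‖x − p₂‖. Then for every x ∈ ℝ³ with ‖x‖ ≥ 3, ‖∇(u²)(x)‖ / (2 u(x)⁴) ≤ 3m/(4‖x‖), where ∇ is the Euclidean gradient and u⁴ = (u²)². -/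
/-!
Each summand `m / ‖y - pᵢ‖` has gradient of norm at most `m / rᵢ ^ 2`, since `y ↦ ‖y - pᵢ‖` is
1-Lipschitz. Dividing by `2 u⁴ ≥ 2` and using `rᵢ ≥ ‖x‖ - 1` bounds the quotient by
`m / (‖x‖ - 1) ^ 2`, and `4 ‖x‖ ≤ 3 (‖x‖ - 1) ^ 2` once `‖x‖ ≥ 3`.
-/

open InnerProductSpace

variable {E : Type*} [NormedAddCommGroup E]

/-- The function `u²` of the Majumdar–Papapetrou data with poles `p` and `q`. -/
noncomputable def mpPotential (m : ℝ) (p q y : E) : ℝ := 1 + m / ‖y - p‖ + m / ‖y - q‖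

lemma one_le_mpPotential {m : ℝ} (hm : 0 ≤ m) (p q y : E) : 1 ≤ mpPotential m p q y := by
  have := div_nonneg hm (norm_nonneg (y - p))
  have := div_nonneg hm (norm_nonneg (y - q))
  unfold mpPotential
  linarith

variable [InnerProductSpace ℝ E]

lemma norm_gradient_eq_norm_fderiv [CompleteSpace E] (f : E → ℝ) (x : E) :
    ‖gradient f x‖ = ‖fderiv ℝ f x‖ :=
  (toDual ℝ E).symm.norm_map _

lemma norm_fderiv_norm_sub_le (p x : E) : ‖fderiv ℝ (fun y => ‖y - p‖) x‖ ≤ 1 := by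
  simpa [dist_eq_norm] using
    norm_fderiv_le_of_lipschitz ℝ (LipschitzWith.dist_left p) (x₀ := x)

lemma hasFDerivAt_div_norm_sub (m : ℝ) {p x : E} (hx : x ≠ p) :
    HasFDerivAt (fun y => m / ‖y - p‖)
      ((-m / ‖x - p‖ ^ 2) • fderiv ℝ (fun y => ‖y - p‖) x) x := by
  have hdist : DifferentiableAt ℝ (fun y => ‖y - p‖) x :=
    (differentiableAt_id.sub_const p).norm ℝ (sub_ne_zero.2 hx)
  have hdiv : HasDerivAt (fun t : ℝ => m / t) (-m / ‖x - p‖ ^ 2) ‖x - p‖ := by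
    simpa [div_eq_mul_inv, neg_div] using
      (hasDerivAt_inv (norm_ne_zero_iff.2 (sub_ne_zero.2 hx))).const_mul m
  exact hdiv.comp_hasFDerivAt x hdist.hasFDerivAt

lemma norm_gradient_mpPotential_le [CompleteSpace E] (m : ℝ) {p q x : E}
    (hp : x ≠ p) (hq : x ≠ q) :
    ‖gradient (mpPotential m p q) x‖ ≤ |m| / ‖x - p‖ ^ 2 + |m| / ‖x - q‖ ^ 2 := by
  have hsum :=
    ((hasFDerivAt_div_norm_sub m hp).const_add 1).add (hasFDerivAt_div_norm_sub m hq)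
  have hterm (r : E) :
      ‖(-m / ‖x - r‖ ^ 2) • fderiv ℝ (fun y => ‖y - r‖) x‖ ≤ |m| / ‖x - r‖ ^ 2 := by
    rw [norm_smul, norm_div, norm_neg, norm_pow, Real.norm_eq_abs, Real.norm_eq_abs, abs_norm]
    exact mul_le_of_le_one_right (by positivity) (norm_fderiv_norm_sub_le r x)
  rw [norm_gradient_eq_norm_fderiv, HasFDerivAt.fderiv (f := mpPotential m p q) hsum]
  exact (norm_add_le _ _).trans (add_le_add (hterm p) (hterm q))

lemma one_div_sub_one_sq_le {t : ℝ} (ht : 3 ≤ t) : 1 / (t - 1) ^ 2 ≤ 3 / (4 * t) := by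
  rw [div_le_div_iff₀ (by nlinarith) (by linarith)]
  nlinarith

lemma norm_gradient_div_two_mul_mpPotential_sq_le [CompleteSpace E] {m : ℝ} (hm : 0 ≤ m)
    {p q x : E} (hp : ‖p‖ ≤ 1) (hq : ‖q‖ ≤ 1) (hx : 3 ≤ ‖x‖) :
    ‖gradient (mpPotential m p q) x‖ / (2 * mpPotential m p q x ^ 2) ≤ 3 * m / (4 * ‖x‖) := by
  have hfar {r : E} (hr : ‖r‖ ≤ 1) : ‖x‖ - 1 ≤ ‖x - r‖ := by linarith [norm_sub_norm_le x r]
  have hne {r : E} (hr : ‖r‖ ≤ 1) : x ≠ r :=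
    sub_ne_zero.1 (norm_pos_iff.1 (by linarith [hfar hr]))
  have hden : 2 ≤ 2 * mpPotential m p q x ^ 2 := by
    nlinarith [one_le_mpPotential hm p q x]
  calc ‖gradient (mpPotential m p q) x‖ / (2 * mpPotential m p q x ^ 2)
      ≤ (m / ‖x - p‖ ^ 2 + m / ‖x - q‖ ^ 2) / 2 := by
        gcongr
        simpa only [abs_of_nonneg hm] using norm_gradient_mpPotential_le m (hne hp) (hne hq)
    _ ≤ (m / (‖x‖ - 1) ^ 2 + m / (‖x‖ - 1) ^ 2) / 2 := by
        have : 0 < ‖x‖ - 1 := by linarith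
        gcongr
        exacts [hfar hp, hfar hq]
    _ = m * (1 / (‖x‖ - 1) ^ 2) := by ring
    _ ≤ m * (3 / (4 * ‖x‖)) := mul_le_mul_of_nonneg_left (one_div_sub_one_sq_le hx) hm
    _ = 3 * m / (4 * ‖x‖) := by ring

theorem mp_log_gradient_bound_far (m : ℝ) (hm : 0 < m)
    (x : EuclideanSpace ℝ (Fin 3)) (hx : 3 ≤ ‖x‖) :
    ‖gradient
        (fun y : EuclideanSpace ℝ (Fin 3) =>
          1 + m / ‖y - EuclideanSpace.single (2 : Fin 3) (1 : ℝ)‖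
            + m / ‖y - EuclideanSpace.single (2 : Fin 3) (-1 : ℝ)‖) x‖ /
      (2 * (1 + m / ‖x - EuclideanSpace.single (2 : Fin 3) (1 : ℝ)‖
              + m / ‖x - EuclideanSpace.single (2 : Fin 3) (-1 : ℝ)‖) ^ 2)
      ≤ 3 * m / (4 * ‖x‖) :=
  norm_gradient_div_two_mul_mpPotential_sq_le hm.le (by simp) (by simp) hx
end
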